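/- arXiv:1403.4696 — 5 statements merged into one kernel-verified Lean document; each statement's English description precedes it below -/
import Mathlib

section
/- Monotonicity of the extreme floor levels: under Assumption 1, for every initial vector x(0) ∈ ℝ^n and every k ≥ 0, M(k+1) ≤ M(k) and m(k+1) ≥ m(k); consequently m(0) ≤ ⌊x_i(k)⌋ ≤ M(0) for every agent i and every k. -/
open Finset Filter

/-- Assumption 1 on the weight matrix `W` relative to the graph `G`:
symmetric, nonnegative, rows sum to 1, diagonally dominant (`w_ii > 1/2`),
respects the communication graph, and rational weights in `(0,1)` on edges. -/
def Assumption1 {n : ℕ} (G : SimpleGraph (Fin n)) (W : Matrix (Fin n) (Fin n) ℝ) : Prop :=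
  (∀ i j, W i j = W j i) ∧
  (∀ i j, 0 ≤ W i j) ∧
  (∀ i, ∑ j, W i j = 1) ∧
  (∀ i, 1 / 2 < W i i) ∧
  (∀ i j, i ≠ j → ¬G.Adj i j → W i j = 0) ∧
  (∀ i j, G.Adj i j → (∃ q : ℚ, (q : ℝ) = W i j) ∧ 0 < W i j ∧ W i j < 1)

/-- The quantized system `x(k+1) = W ⌊x(k)⌋ + x(k) − ⌊x(k)⌋`, componentwise. -/
def Traj {n : ℕ} (W : Matrix (Fin n) (Fin n) ℝ) (x : ℕ → Fin n → ℝ) : Prop :=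
  ∀ k i, x (k + 1) i = (∑ j, W i j * (⌊x k j⌋ : ℝ)) + x k i - (⌊x k i⌋ : ℝ)

/-- `m(k) = min_i ⌊x_i(k)⌋`. -/
noncomputable def mfun {n : ℕ} (hn : 0 < n) (x : ℕ → Fin n → ℝ) (k : ℕ) : ℤ :=
  Finset.univ.inf' ⟨⟨0, hn⟩, Finset.mem_univ _⟩ fun i => ⌊x k i⌋

/-- `M(k) = max_i ⌊x_i(k)⌋`. -/
noncomputable def Mfun {n : ℕ} (hn : 0 < n) (x : ℕ → Fin n → ℝ) (k : ℕ) : ℤ :=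
  Finset.univ.sup' ⟨⟨0, hn⟩, Finset.mem_univ _⟩ fun i => ⌊x k i⌋

/-- The γ gap conditions (fractional part `c_i(k) = x_i(k) − ⌊x_i(k)⌋`). -/
def GammaSetup {n : ℕ} (W : Matrix (Fin n) (Fin n) ℝ) (x : ℕ → Fin n → ℝ) (γ : ℝ) : Prop :=
  0 < γ ∧
  ∀ i k,
    (x k i - (⌊x k i⌋ : ℝ) > 1 - W i i → x k i - (⌊x k i⌋ : ℝ) - (1 - W i i) ≥ 2 * γ) ∧
    (1 - (x k i - (⌊x k i⌋ : ℝ)) > 1 - W i i →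
      1 - (x k i - (⌊x k i⌋ : ℝ)) - (1 - W i i) ≥ 2 * γ) ∧
    1 - (x k i - (⌊x k i⌋ : ℝ)) ≥ 2 * γ ∧
    1 / 2 - (1 - W i i) ≥ 2 * γ

/-- `α_i = 1 − w_ii + γ`. -/
noncomputable def alpha {n : ℕ} (W : Matrix (Fin n) (Fin n) ℝ) (γ : ℝ) (i : Fin n) : ℝ :=
  1 - W i i + γ

/-- The Lyapunov function `V(k) = Σ_i max{|x_i(k) − m(k) − 1| − α_i, 0}`. -/
noncomputable def Vfun {n : ℕ} (hn : 0 < n) (W : Matrix (Fin n) (Fin n) ℝ) (γ : ℝ)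
    (x : ℕ → Fin n → ℝ) (k : ℕ) : ℝ :=
  ∑ i, max (|x k i - (mfun hn x k : ℝ) - 1| - alpha W γ i) 0

/-- `δ = min_{(p,q) ∈ E} w_pq`. -/
noncomputable def deltaMin {n : ℕ} (G : SimpleGraph (Fin n)) (W : Matrix (Fin n) (Fin n) ℝ) : ℝ :=
  sInf {r : ℝ | ∃ p q, G.Adj p q ∧ r = W p q}

open Classical in
/-- `T_s(k0,k)`: number of times `t ∈ [k0,k]` at which node `s` lies in `X1 ∪ X2`,
i.e. `x_s(t) < m(t) + 1`. -/
noncomputable def Tcount {n : ℕ} (hn : 0 < n) (x : ℕ → Fin n → ℝ) (s : Fin n)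
    (k0 k : ℕ) : ℕ :=
  ((Finset.Icc k0 k).filter fun t => x t s < (mfun hn x t : ℝ) + 1).card

/-!
Each update replaces `x_i` by `∑_j w_ij ⌊x_j⌋ + frac(x_i)`. Since row `i` of `W` is a probability
vector, the weighted sum lies in `[m(k), M(k)]`, and adding a fractional part in `[0, 1)` cannot
push the floor out of this integer interval. Hence every `⌊x_i(k+1)⌋` lies in `[m(k), M(k)]`.
-/

theorem le_sum_mul_of_forall_le {ι : Type*} [Fintype ι] {w f : ι → ℝ} {a : ℝ}
    (hw : ∀ j, 0 ≤ w j) (hsum : ∑ j, w j = 1) (hf : ∀ j, a ≤ f j) : a ≤ ∑ j, w j * f j :=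
  calc a = ∑ j, w j * a := by rw [← sum_mul, hsum, one_mul]
    _ ≤ ∑ j, w j * f j := sum_le_sum fun j _ => mul_le_mul_of_nonneg_left (hf j) (hw j)

theorem sum_mul_le_of_forall_le {ι : Type*} [Fintype ι] {w f : ι → ℝ} {a : ℝ}
    (hw : ∀ j, 0 ≤ w j) (hsum : ∑ j, w j = 1) (hf : ∀ j, f j ≤ a) : ∑ j, w j * f j ≤ a :=
  calc ∑ j, w j * f j ≤ ∑ j, w j * a :=
        sum_le_sum fun j _ => mul_le_mul_of_nonneg_left (hf j) (hw j)
    _ = a := by rw [← sum_mul, hsum, one_mul]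

theorem floor_add_fract_mem_Icc {a y : ℝ} {m M : ℤ} (hm : (m : ℝ) ≤ a) (hM : a ≤ M) :
    ⌊a + Int.fract y⌋ ∈ Set.Icc m M := by
  have h0 := Int.fract_nonneg y
  have h1 := Int.fract_lt_one y
  constructor
  · rw [Int.le_floor]; linarith
  · rw [← Int.lt_add_one_iff, Int.floor_lt]; push_cast; linarith

section Trajectory

variable {n : ℕ} (hn : 0 < n) {W : Matrix (Fin n) (Fin n) ℝ} {x : ℕ → Fin n → ℝ}

theorem mfun_le_floor (k : ℕ) (i : Fin n) : mfun hn x k ≤ ⌊x k i⌋ :=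
  inf'_le _ (mem_univ i)

theorem floor_le_Mfun (k : ℕ) (i : Fin n) : ⌊x k i⌋ ≤ Mfun hn x k :=
  le_sup' (fun j => ⌊x k j⌋) (mem_univ i)

variable (hnn : ∀ i j, 0 ≤ W i j) (hrow : ∀ i, ∑ j, W i j = 1) (hx : Traj W x)
include hnn hrow hx

theorem floor_succ_mem_Icc (k : ℕ) (i : Fin n) :
    ⌊x (k + 1) i⌋ ∈ Set.Icc (mfun hn x k) (Mfun hn x k) := by
  rw [hx k i, add_sub_assoc, Int.self_sub_floor]
  exact floor_add_fract_mem_Icc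
    (le_sum_mul_of_forall_le (hnn i) (hrow i) fun j => by exact_mod_cast mfun_le_floor hn k j)
    (sum_mul_le_of_forall_le (hnn i) (hrow i) fun j => by exact_mod_cast floor_le_Mfun hn k j)

theorem mfun_le_mfun_succ (k : ℕ) : mfun hn x k ≤ mfun hn x (k + 1) :=
  le_inf' _ _ fun i _ => (floor_succ_mem_Icc hn hnn hrow hx k i).1

theorem Mfun_succ_le_Mfun (k : ℕ) : Mfun hn x (k + 1) ≤ Mfun hn x k :=
  sup'_le _ _ fun i _ => (floor_succ_mem_Icc hn hnn hrow hx k i).2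

end Trajectory

theorem extreme_floor_monotonicity_general {n : ℕ} (hn : 1 < n)
    (G : SimpleGraph (Fin n))
    (W : Matrix (Fin n) (Fin n) ℝ) (hW : Assumption1 G W)
    (x : ℕ → Fin n → ℝ) (hx : Traj W x) :
    (∀ k, Mfun (Nat.zero_lt_one.trans hn) x (k + 1) ≤ Mfun (Nat.zero_lt_one.trans hn) x k ∧
      mfun (Nat.zero_lt_one.trans hn) x k ≤ mfun (Nat.zero_lt_one.trans hn) x (k + 1)) ∧
    (∀ k i, mfun (Nat.zero_lt_one.trans hn) x 0 ≤ ⌊x k i⌋ ∧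
      ⌊x k i⌋ ≤ Mfun (Nat.zero_lt_one.trans hn) x 0) := by
  set hn₀ : 0 < n := Nat.zero_lt_one.trans hn
  obtain ⟨-, hnn, hrow, -⟩ := hW
  have hM : Antitone (Mfun hn₀ x) := antitone_nat_of_succ_le (Mfun_succ_le_Mfun hn₀ hnn hrow hx)
  have hm : Monotone (mfun hn₀ x) := monotone_nat_of_le_succ (mfun_le_mfun_succ hn₀ hnn hrow hx)
  refine ⟨fun k => ⟨hM k.le_succ, hm k.le_succ⟩, fun k i => ⟨?_, ?_⟩⟩
  · exact (hm k.zero_le).trans (mfun_le_floor hn₀ k i)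
  · exact (floor_le_Mfun hn₀ k i).trans (hM k.zero_le)

/-- Monotonicity of the extreme floor levels: `M(k)` is non-increasing and
`m(k)` is non-decreasing; consequently `m(0) ≤ ⌊x_i(k)⌋ ≤ M(0)`. -/
theorem extreme_floor_monotonicity {n : ℕ} (hn : 1 < n)
    (G : SimpleGraph (Fin n)) (hG : G.Connected)
    (W : Matrix (Fin n) (Fin n) ℝ) (hW : Assumption1 G W)
    (x : ℕ → Fin n → ℝ) (hx : Traj W x) :
    (∀ k, Mfun (Nat.zero_lt_one.trans hn) x (k + 1) ≤ Mfun (Nat.zero_lt_one.trans hn) x k ∧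
      mfun (Nat.zero_lt_one.trans hn) x k ≤ mfun (Nat.zero_lt_one.trans hn) x (k + 1)) ∧
    (∀ k i, mfun (Nat.zero_lt_one.trans hn) x 0 ≤ ⌊x k i⌋ ∧
      ⌊x k i⌋ ≤ Mfun (Nat.zero_lt_one.trans hn) x 0) :=
  extreme_floor_monotonicity_general hn G W hW x hx
end

section
/- Proposition 1 (the quantized system is cyclic): under Assumption 1, for every initial vector x(0) ∈ ℝ^n there exist a positive integer P and a finite time k0 such that x(k+P) = x(k) for all k ≥ k0. -/
open Finset Filter

/-! The weights are rational, so for a common denominator `D` of them each `D * (x_i(k) - x_i(0))`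
stays an integer. The update adds a convex combination of floors to a fractional part, so every
`x_i(k)` stays in an integer interval `[a, b)` containing all `x_i(0)`. The trajectory therefore
ranges over a finite set, and being generated by a fixed map it is eventually periodic. -/

theorem Set.Finite.exists_periodic_of_succ_eq {α : Type*} {u : ℕ → α} (f : α → α)
    (hu : ∀ k, u (k + 1) = f (u k)) (hfin : (Set.range u).Finite) :
    ∃ P : ℕ, 0 < P ∧ ∃ k0 : ℕ, ∀ k, k0 ≤ k → u (k + P) = u k := by
  obtain ⟨a, b, hab, hu_eq⟩ := hfin.exists_lt_map_eq_of_forall_mem (f := u) Set.mem_range_self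
  refine ⟨b - a, Nat.sub_pos_of_lt hab, a, fun k hk => ?_⟩
  induction k, hk using Nat.le_induction with
  | base => rw [Nat.add_sub_cancel' hab.le, hu_eq]
  | succ k _ ih => rw [Nat.add_right_comm, hu, ih, hu]

theorem exists_pos_int_mul_eq_int {ι : Type*} [Fintype ι] (f : ι → ℝ)
    (hf : ∀ i, ∃ q : ℚ, (q : ℝ) = f i) :
    ∃ D : ℤ, 0 < D ∧ ∀ i, ∃ z : ℤ, (D : ℝ) * f i = z := by
  choose q hq using hf
  refine ⟨∏ i, ((q i).den : ℤ), prod_pos fun i _ => mod_cast (q i).pos, fun i => ?_⟩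
  obtain ⟨m, hm⟩ := dvd_prod_of_mem (fun i => ((q i).den : ℤ)) (mem_univ i)
  refine ⟨(q i).num * m, ?_⟩
  have hnum : (q i : ℝ) * (q i).den = (q i).num := by exact_mod_cast Rat.mul_den_eq_num (q i)
  rw [hm, ← hq i]
  push_cast
  linear_combination (m : ℝ) * hnum

theorem Assumption1.exists_rat_eq {n : ℕ} {G : SimpleGraph (Fin n)}
    {W : Matrix (Fin n) (Fin n) ℝ} (hW : Assumption1 G W) (i j : Fin n) :
    ∃ q : ℚ, (q : ℝ) = W i j := by
  obtain ⟨-, -, hrow, -, hzero, hedge⟩ := hW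
  have hoff : ∀ j, j ≠ i → W i j ∈ (Rat.castHom ℝ).range := fun j hji => by
    by_cases hadj : G.Adj i j
    · exact (hedge i j hadj).1
    · exact ⟨0, by simp [hzero i j hji.symm hadj]⟩
  suffices W i j ∈ (Rat.castHom ℝ).range from this
  rcases eq_or_ne j i with rfl | hji
  · have hdiag : W j j = 1 - ∑ k ∈ univ.erase j, W j k := by
      rw [← hrow j, ← Finset.add_sum_erase _ _ (mem_univ j)]
      ring
    rw [hdiag]
    exact sub_mem (one_mem _) (sum_mem fun k hk => hoff k (ne_of_mem_erase hk))
  · exact hoff j hji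

theorem exists_int_forall_mem_Ico {ι : Type*} [Finite ι] (v : ι → ℝ) :
    ∃ a b : ℤ, ∀ i, v i ∈ Set.Ico (a : ℝ) b := by
  obtain ⟨L, hL⟩ := (Set.finite_range v).bddBelow
  obtain ⟨U, hU⟩ := (Set.finite_range v).bddAbove
  refine ⟨⌊L⌋, ⌊U⌋ + 1, fun i => ⟨?_, ?_⟩⟩
  · exact (Int.floor_le L).trans (hL ⟨i, rfl⟩)
  · push_cast
    exact (hU ⟨i, rfl⟩).trans_lt (Int.lt_floor_add_one U)

theorem finite_setOf_mem_Icc_mul_sub_eq_int {D : ℝ} (hD : 0 < D) (c a b : ℝ) :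
    {t : ℝ | t ∈ Set.Icc a b ∧ ∃ z : ℤ, D * (t - c) = z}.Finite := by
  refine ((Set.finite_Icc ⌈D * (a - c)⌉ ⌊D * (b - c)⌋).image
    fun z : ℤ => c + z / D).subset ?_
  rintro t ⟨⟨hat, htb⟩, z, hz⟩
  refine ⟨z, ⟨Int.ceil_le.2 ?_, Int.le_floor.2 ?_⟩, ?_⟩
  · rw [← hz]; gcongr
  · rw [← hz]; gcongr
  · simp only [← hz]
    field_simp
    ring

namespace Traj

variable {n : ℕ} {W : Matrix (Fin n) (Fin n) ℝ} {x : ℕ → Fin n → ℝ}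

theorem mem_Ico (hx : Traj W x) (hnonneg : ∀ i j, 0 ≤ W i j) (hrow : ∀ i, ∑ j, W i j = 1)
    {a b : ℤ} (h0 : ∀ i, x 0 i ∈ Set.Ico (a : ℝ) b) (k : ℕ) (i : Fin n) :
    x k i ∈ Set.Ico (a : ℝ) b := by
  induction k generalizing i with
  | zero => exact h0 i
  | succ k ih =>
    have hfloor : ∀ j, (⌊x k j⌋ : ℝ) ∈ Set.Icc (a : ℝ) (b - 1) := fun j => by
      obtain ⟨h1, h2⟩ := ih j
      constructor
      · exact_mod_cast Int.le_floor.2 h1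
      · exact_mod_cast Int.le_sub_one_of_lt (Int.floor_lt.2 h2)
    have havg := (convex_Icc (a : ℝ) (b - 1)).sum_mem (t := univ) (fun j _ => hnonneg i j)
      (hrow i) fun j _ => hfloor j
    simp only [smul_eq_mul] at havg
    have hfract := Int.fract_nonneg (x k i)
    have hfract' := Int.fract_lt_one (x k i)
    rw [Int.fract] at hfract hfract'
    rw [hx k i]
    constructor <;> linarith [havg.1, havg.2]

theorem exists_int_eq_mul_sub (hx : Traj W x) {D : ℤ}
    (hD : ∀ i j, ∃ z : ℤ, D * W i j = z) (k : ℕ) (i : Fin n) :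
    ∃ z : ℤ, D * (x k i - x 0 i) = z := by
  choose z hz using hD
  induction k generalizing i with
  | zero => exact ⟨0, by simp⟩
  | succ k ih =>
    obtain ⟨w, hw⟩ := ih i
    refine ⟨∑ j, z i j * ⌊x k j⌋ - D * ⌊x k i⌋ + w, ?_⟩
    have hsum : (D : ℝ) * ∑ j, W i j * ⌊x k j⌋ = ∑ j, (z i j : ℝ) * ⌊x k j⌋ := by
      rw [Finset.mul_sum]
      exact sum_congr rfl fun j _ => by rw [← hz, mul_assoc]
    push_cast
    rw [← hw, ← hsum, hx k i]
    ring

end Traj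

theorem quantized_system_cyclic_general {n : ℕ}
    (G : SimpleGraph (Fin n))
    (W : Matrix (Fin n) (Fin n) ℝ) (hW : Assumption1 G W)
    (x : ℕ → Fin n → ℝ) (hx : Traj W x) :
    ∃ P : ℕ, 0 < P ∧ ∃ k0 : ℕ, ∀ k, k0 ≤ k → x (k + P) = x k := by
  obtain ⟨D, hD, hDW⟩ := exists_pos_int_mul_eq_int (fun p : Fin n × Fin n => W p.1 p.2)
    fun p => hW.exists_rat_eq p.1 p.2
  obtain ⟨-, hnonneg, hrow, -⟩ := hW
  obtain ⟨a, b, hab⟩ := exists_int_forall_mem_Ico (x 0)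
  have hfin : (Set.range x).Finite := by
    refine (Set.Finite.pi fun i => finite_setOf_mem_Icc_mul_sub_eq_int (Int.cast_pos.2 hD)
      (x 0 i) a b).subset ?_
    rintro _ ⟨k, rfl⟩ i -
    exact ⟨Set.Ico_subset_Icc_self (hx.mem_Ico hnonneg hrow hab k i),
      hx.exists_int_eq_mul_sub (fun i j => hDW (i, j)) k i⟩
  exact hfin.exists_periodic_of_succ_eq (fun v i => ∑ j, W i j * ⌊v j⌋ + v i - ⌊v i⌋)
    fun k => funext (hx k)

/-- Proposition 1: under Assumption 1 the quantized system is cyclic. -/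
theorem quantized_system_cyclic {n : ℕ} (hn : 1 < n)
    (G : SimpleGraph (Fin n)) (hG : G.Connected)
    (W : Matrix (Fin n) (Fin n) ℝ) (hW : Assumption1 G W)
    (x : ℕ → Fin n → ℝ) (hx : Traj W x) :
    ∃ P : ℕ, 0 < P ∧ ∃ k0 : ℕ, ∀ k, k0 ≤ k → x (k + P) = x k :=
  quantized_system_cyclic_general G W hW x hx
end

section
/- Lemma 1 (emptiness of X6 persists): under Assumption 1 and the γ/α setup, if X6(k0) = ∅ at some time k0 (i.e. x_i(k0) < m(k0) + 2 + α_i for every i), then X6(k) = ∅ for all k ≥ k0 (i.e. x_i(k) < m(k) + 2 + α_i for every i and every k ≥ k0). -/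
open Finset Filter

/-! Write `m = m(k)`. Since every node is below `m + 2 + α_j < m + 3`, all floors are at most
`m + 2`, so node `i` gains at most `(1 - w_ii)(m + 2 - ⌊x_i⌋)` in one step. A node with floor
`m + 2` therefore does not increase, and a node with floor at most `m + 1` ends below
`w_ii (m + 1) + (1 - w_ii)(m + 2) + 1 = m + 2 + (1 - w_ii) < m + 2 + α_i`.
As `m` is nondecreasing, the bound at time `k + 1` follows. -/

section WeightedSum

variable {ι : Type*} [Fintype ι] {w y : ι → ℝ}

theorem le_sum_mul_of_forall_le_s5 (hw : ∀ j, 0 ≤ w j) (hsum : ∑ j, w j = 1) {b : ℝ}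
    (hy : ∀ j, b ≤ y j) : b ≤ ∑ j, w j * y j :=
  calc b = ∑ j, w j * b := by rw [← Finset.sum_mul, hsum, one_mul]
    _ ≤ ∑ j, w j * y j := Finset.sum_le_sum fun j _ => mul_le_mul_of_nonneg_left (hy j) (hw j)

theorem sum_mul_le_of_forall_le_s5 [DecidableEq ι] (hw : ∀ j, 0 ≤ w j) (hsum : ∑ j, w j = 1)
    {B : ℝ} (hy : ∀ j, y j ≤ B) (i : ι) : ∑ j, w j * y j ≤ w i * y i + (1 - w i) * B := by
  have hcompl : ∑ j ∈ {i}ᶜ, w j = 1 - w i := by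
    rw [← hsum, Fintype.sum_eq_add_sum_compl i]; ring
  have hrest : ∑ j ∈ {i}ᶜ, w j * y j ≤ ∑ j ∈ {i}ᶜ, w j * B :=
    Finset.sum_le_sum fun j _ => mul_le_mul_of_nonneg_left (hy j) (hw j)
  rw [← Finset.sum_mul, hcompl] at hrest
  rw [Fintype.sum_eq_add_sum_compl i]
  linarith

end WeightedSum

section Trajectory

variable {n : ℕ} (hn : 0 < n) {W : Matrix (Fin n) (Fin n) ℝ} {x : ℕ → Fin n → ℝ}

theorem mfun_le_mfun_succ_s5 (hnn : ∀ i j, 0 ≤ W i j) (hrow : ∀ i, ∑ j, W i j = 1)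
    (hx : Traj W x) (k : ℕ) : mfun hn x k ≤ mfun hn x (k + 1) := by
  refine Finset.le_inf' _ _ fun i _ => Int.le_floor.mpr ?_
  have hmean : (mfun hn x k : ℝ) ≤ ∑ j, W i j * ⌊x k j⌋ :=
    le_sum_mul_of_forall_le_s5 (hnn i) (hrow i) fun j => by exact_mod_cast mfun_le_floor hn k j
  rw [hx k i]
  linarith [Int.floor_le (x k i)]

theorem monotone_mfun (hnn : ∀ i j, 0 ≤ W i j) (hrow : ∀ i, ∑ j, W i j = 1)
    (hx : Traj W x) : Monotone (mfun hn x) :=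
  monotone_nat_of_le_succ (mfun_le_mfun_succ_s5 hn hnn hrow hx)

theorem floor_le_mfun_add_two {a : Fin n → ℝ} (ha : ∀ j, a j ≤ 1) {k : ℕ}
    (hk : ∀ j, x k j < mfun hn x k + 2 + a j) (j : Fin n) : ⌊x k j⌋ ≤ mfun hn x k + 2 := by
  have : ⌊x k j⌋ < mfun hn x k + 3 :=
    Int.floor_lt.mpr (by push_cast; linarith [hk j, ha j])
  omega

theorem lt_mfun_add_two_succ (hnn : ∀ i j, 0 ≤ W i j) (hrow : ∀ i, ∑ j, W i j = 1)
    (hx : Traj W x) {a : Fin n → ℝ} (ha : ∀ j, a j ≤ 1) (hWa : ∀ j, 1 - W j j < a j) {k : ℕ}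
    (hk : ∀ j, x k j < mfun hn x k + 2 + a j) (i : Fin n) :
    x (k + 1) i < mfun hn x k + 2 + a i := by
  set m : ℤ := mfun hn x k
  have hfloor := floor_le_mfun_add_two hn ha hk
  have hsum : ∑ j, W i j * ⌊x k j⌋ ≤ W i i * ⌊x k i⌋ + (1 - W i i) * (m + 2) :=
    sum_mul_le_of_forall_le_s5 (hnn i) (hrow i) (fun j => by exact_mod_cast hfloor j) i
  rw [hx k i]
  rcases (hfloor i).lt_or_eq with hlow | htop
  · have hlow : (⌊x k i⌋ : ℝ) ≤ m + 1 := by exact_mod_cast (show ⌊x k i⌋ ≤ m + 1 by omega)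
    have hdiag : W i i * ⌊x k i⌋ ≤ W i i * (m + 1) := mul_le_mul_of_nonneg_left hlow (hnn i i)
    linarith [Int.lt_floor_add_one (x k i), hWa i]
  · have htop : (⌊x k i⌋ : ℝ) = m + 2 := by rw [htop]; push_cast; ring
    rw [htop] at hsum ⊢
    linarith [hk i]

end Trajectory

theorem X6_empty_persists_general {n : ℕ} (hn : 1 < n)
    (G : SimpleGraph (Fin n))
    (W : Matrix (Fin n) (Fin n) ℝ) (hW : Assumption1 G W)
    (x : ℕ → Fin n → ℝ) (hx : Traj W x)
    (γ : ℝ) (hγ : GammaSetup W x γ)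
    (k0 : ℕ)
    (h6 : ∀ i, x k0 i < (mfun (Nat.zero_lt_one.trans hn) x k0 : ℝ) + 2 + alpha W γ i) :
    ∀ k, k0 ≤ k →
      ∀ i, x k i < (mfun (Nat.zero_lt_one.trans hn) x k : ℝ) + 2 + alpha W γ i := by
  obtain ⟨-, hnn, hrow, -, -, -⟩ := hW
  obtain ⟨hγpos, hgap⟩ := hγ
  have hα_le : ∀ j, alpha W γ j ≤ 1 := fun j => by
    have := (hgap j 0).2.2.2; unfold alpha; linarith
  have hα_gt : ∀ j, 1 - W j j < alpha W γ j := fun j => by unfold alpha; linarith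
  have hm := monotone_mfun (Nat.zero_lt_one.trans hn) hnn hrow hx
  intro k hk
  induction k, hk using Nat.le_induction with
  | base => exact h6
  | succ k _ ih =>
    intro i
    have hstep := lt_mfun_add_two_succ _ hnn hrow hx hα_le hα_gt ih i
    have hmk := (Int.cast_le (R := ℝ)).mpr (hm k.le_succ)
    linarith

/-- Lemma 1: if `X6(k0) = ∅` then `X6(k) = ∅` for all `k ≥ k0`. -/
theorem X6_empty_persists {n : ℕ} (hn : 1 < n)
    (G : SimpleGraph (Fin n)) (hG : G.Connected)
    (W : Matrix (Fin n) (Fin n) ℝ) (hW : Assumption1 G W)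
    (x : ℕ → Fin n → ℝ) (hx : Traj W x)
    (γ : ℝ) (hγ : GammaSetup W x γ)
    (k0 : ℕ)
    (h6 : ∀ i, x k0 i < (mfun (Nat.zero_lt_one.trans hn) x k0 : ℝ) + 2 + alpha W γ i) :
    ∀ k, k0 ≤ k →
      ∀ i, x k i < (mfun (Nat.zero_lt_one.trans hn) x k : ℝ) + 2 + alpha W γ i :=
  X6_empty_persists_general hn G W hW x hx γ hγ k0 h6
end

section
/- Lemma 3 (Lyapunov function is non-increasing): under Assumption 1 and the γ/α setup, for any time k at which m(k+1) = m(k), the Lyapunov function V(k) = Σ_i max{|x_i(k) − m(k) − 1| − α_i, 0} satisfies V(k+1) − V(k) ≤ 0. -/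
open Finset Filter

/-!
Write `m = m(k)`, `d_i = ⌊x_i(k)⌋ - m ∈ ℕ` and `c_i` for the fractional part. Node `i` sits at
`y_i = d_i + c_i - 1` relative to `m + 1` and moves to `Y_i = (W d)_i + c_i - 1`; as `m(k+1) = m`,
`V(k+1) - V(k) = ∑ᵢ ρᵢ(Yᵢ) - ρᵢ(yᵢ)` with `ρᵢ(t) = max (|t| - αᵢ) 0`. Convexity bounds each term by
`σᵢ (Yᵢ - yᵢ)` for a subgradient `σᵢ ∈ {-1, 0, 1}` of `ρᵢ` at `Yᵢ`, and this can be sharpened by a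
slack `bᵢ (1 - wᵢᵢ)` with `bᵢ ≥ 0`. As `W` is symmetric and stochastic,
`∑ᵢ σᵢ ((W d)ᵢ - dᵢ) = ½ ∑ᵢⱼ wᵢⱼ (σᵢ - σⱼ)(dⱼ - dᵢ)`, and a case check gives
`(σᵢ - σⱼ)(dⱼ - dᵢ) ≤ bᵢ + bⱼ` whenever `dᵢ < dⱼ`; summed, the right side is `∑ᵢ bᵢ (1 - wᵢᵢ)`.
-/

noncomputable def bandExcess (a t : ℝ) : ℝ := max (|t| - a) 0

/-- A subgradient of `bandExcess a` at `t`. -/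
noncomputable def bandSign (a t : ℝ) : ℝ := if a ≤ t then 1 else if t ≤ -a then -1 else 0

/-- How much the subgradient bound for a node at level `d` moving to `t` can be sharpened, in units
of `1 - w` (see `bandExcess_sub_le`). -/
noncomputable def bandSlack (a t : ℝ) (d : ℕ) : ℝ :=
  if a ≤ t then max (1 - d) 0 else if t ≤ -a then 0 else max (d - 1) 0

theorem bandSlack_nonneg (a t : ℝ) (d : ℕ) : 0 ≤ bandSlack a t d := by
  unfold bandSlack; split_ifs <;> simp

theorem bandExcess_sub_le {a w c t : ℝ} {d : ℕ} (ha0 : 0 ≤ a) (ha : 1 - w ≤ a) (haw : a ≤ w)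
    (hc0 : 0 ≤ c) (hc1 : c ≤ 1) :
    bandExcess a t - bandExcess a (d + c - 1) ≤
      bandSign a t * (t - (d + c - 1)) - bandSlack a t d * (1 - w) := by
  set y : ℝ := d + c - 1
  have hy0 : 0 ≤ bandExcess a y := le_max_right _ _
  have hy_pos : y - a ≤ bandExcess a y :=
    (sub_le_sub_right (le_abs_self y) a).trans (le_max_left _ _)
  have hy_neg : -y - a ≤ bandExcess a y :=
    (sub_le_sub_right (neg_le_abs y) a).trans (le_max_left _ _)
  unfold bandSign bandSlack
  split_ifs with h_top h_bot
  · have : bandExcess a t = t - a := by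
      rw [bandExcess, abs_of_nonneg (by linarith), max_eq_left (by linarith)]
    rcases d.eq_zero_or_pos with hd | hd
    · have hy : y = c - 1 := by simp [y, hd]
      rw [hd, Nat.cast_zero, sub_zero, max_eq_left zero_le_one]
      linarith
    · have : (1 : ℝ) ≤ d := by exact_mod_cast hd
      rw [max_eq_right (by linarith)]
      linarith
  · have : bandExcess a t = -t - a := by
      rw [bandExcess, abs_of_nonpos (by linarith), max_eq_left (by linarith)]
    linarith
  · have ht : |t| < a := abs_lt.mpr ⟨by linarith, by linarith⟩
    have : bandExcess a t = 0 := max_eq_right (by linarith)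
    rcases le_or_gt d 1 with hd | hd
    · have : (d : ℝ) ≤ 1 := by exact_mod_cast hd
      rw [max_eq_right (by linarith)]
      linarith
    · have hd2 : (2 : ℝ) ≤ d := by exact_mod_cast hd
      have : w ≤ (d - 1) * w := le_mul_of_one_le_left (by linarith) (by linarith)
      rw [max_eq_left (by linarith)]
      linarith

theorem bandSign_sub_mul_le {a a' t t' : ℝ} {d d' : ℕ} (hd : d < d') (ht' : -a' < t') :
    (bandSign a t - bandSign a' t') * (d' - d) ≤ bandSlack a t d + bandSlack a' t' d' := by
  have hdd : (0 : ℝ) ≤ d' - d := sub_nonneg.mpr (by exact_mod_cast hd.le)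
  have hb := bandSlack_nonneg a t d
  have hb' := bandSlack_nonneg a' t' d'
  have h_nonpos : bandSign a t ≤ bandSign a' t' →
      (bandSign a t - bandSign a' t') * (d' - d) ≤ bandSlack a t d + bandSlack a' t' d' :=
    fun h => (mul_nonpos_of_nonpos_of_nonneg (sub_nonpos.mpr h) hdd).trans (by linarith)
  by_cases h_top' : a' ≤ t'
  · exact h_nonpos (by unfold bandSign; split_ifs <;> norm_num)
  by_cases h_top : a ≤ t
  · have hs : bandSign a t - bandSign a' t' = 1 := by
      simp [bandSign, h_top, h_top', not_le.mpr ht']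
    have hslack : 1 - d ≤ bandSlack a t d := by simp [bandSlack, h_top]
    have hslack' : d' - 1 ≤ bandSlack a' t' d' := by
      simp [bandSlack, h_top', not_le.mpr ht']
    rw [hs]
    linarith
  · have hs' : bandSign a' t' = 0 := by simp [bandSign, h_top', not_le.mpr ht']
    exact h_nonpos (by rw [hs', bandSign, if_neg h_top]; split_ifs <;> norm_num)

section Stochastic

variable {ι : Type*} [Fintype ι] {W : Matrix ι ι ℝ}

open Matrix

theorem mulVec_apply_sub_eq_sum (hrow : ∀ i, ∑ j, W i j = 1) (d : ι → ℝ) (i : ι) :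
    (W *ᵥ d) i - d i = ∑ j, W i j * (d j - d i) := by
  simp only [mul_sub, Finset.sum_sub_distrib, ← Finset.sum_mul, hrow, one_mul]
  rfl

theorem sum_mul_mulVec_sub_le (hsym : ∀ i j, W i j = W j i) (hnonneg : ∀ i j, 0 ≤ W i j)
    (hrow : ∀ i, ∑ j, W i j = 1) {σ d b : ι → ℝ} (hb : ∀ i, 0 ≤ b i)
    (hpair : ∀ i j, d i < d j → (σ i - σ j) * (d j - d i) ≤ b i + b j) :
    ∑ i, σ i * ((W *ᵥ d) i - d i) ≤ ∑ i, b i * (1 - W i i) := by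
  classical
  have hcol : ∀ j, ∑ i, W i j = 1 := fun j => by simp_rw [hsym _ j, hrow]
  have hpair' : ∀ i j, (σ i - σ j) * (d j - d i) ≤ if i = j then 0 else b i + b j := by
    intro i j
    split_ifs with hij
    · simp [hij]
    rcases lt_trichotomy (d i) (d j) with h | h | h
    · exact hpair i j h
    · simp [h, add_nonneg (hb i) (hb j)]
    · linarith [hpair j i h]
  have hA : ∑ i, σ i * ((W *ᵥ d) i - d i) = ∑ i, ∑ j, W i j * (σ i * (d j - d i)) := by
    refine Finset.sum_congr rfl fun i _ => ?_
    rw [mulVec_apply_sub_eq_sum hrow, Finset.mul_sum]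
    exact Finset.sum_congr rfl fun j _ => by ring
  have hA' : ∑ i, σ i * ((W *ᵥ d) i - d i) = ∑ i, ∑ j, W i j * (-σ j * (d j - d i)) := by
    rw [hA, Finset.sum_comm]
    exact Finset.sum_congr rfl fun i _ => Finset.sum_congr rfl fun j _ => by rw [hsym]; ring
  have hoff : ∑ i, ∑ j, W i j * (if i = j then 0 else b i + b j) = 2 * ∑ i, b i * (1 - W i i) := by
    have hsplit : ∀ i j, W i j * (if i = j then 0 else b i + b j) =
        W i j * b i + W i j * b j - if i = j then W i j * (b i + b j) else 0 := by
      intro i j; split_ifs <;> ring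
    simp only [hsplit, Finset.sum_sub_distrib, Finset.sum_add_distrib, Finset.sum_ite_eq,
      Finset.mem_univ, if_true, ← Finset.sum_mul, hrow, one_mul]
    rw [Finset.sum_comm (f := fun i j => W i j * b j)]
    simp only [← Finset.sum_mul, hcol, one_mul, Finset.mul_sum, ← Finset.sum_add_distrib,
      ← Finset.sum_sub_distrib]
    exact Finset.sum_congr rfl fun i _ => by ring
  have hle : ∑ i, ∑ j, W i j * ((σ i - σ j) * (d j - d i)) ≤
      ∑ i, ∑ j, W i j * (if i = j then 0 else b i + b j) :=
    Finset.sum_le_sum fun i _ => Finset.sum_le_sum fun j _ =>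
      mul_le_mul_of_nonneg_left (hpair' i j) (hnonneg i j)
  have htwo : ∑ i, ∑ j, W i j * ((σ i - σ j) * (d j - d i)) =
      2 * ∑ i, σ i * ((W *ᵥ d) i - d i) := by
    rw [two_mul]
    nth_rw 1 [hA]
    rw [hA', ← Finset.sum_add_distrib]
    refine Finset.sum_congr rfl fun i _ => ?_
    rw [← Finset.sum_add_distrib]
    exact Finset.sum_congr rfl fun j _ => by ring
  linarith

theorem sum_bandExcess_mulVec_le (hsym : ∀ i j, W i j = W j i) (hnonneg : ∀ i j, 0 ≤ W i j)
    (hrow : ∀ i, ∑ j, W i j = 1) {a : ι → ℝ} (ha : ∀ i, 1 - W i i < a i)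
    (haw : ∀ i, a i ≤ W i i) (d : ι → ℕ) {c : ι → ℝ} (hc0 : ∀ i, 0 ≤ c i)
    (hc1 : ∀ i, c i ≤ 1) :
    ∑ i, bandExcess (a i) ((W *ᵥ fun j => (d j : ℝ)) i + c i - 1) ≤
      ∑ i, bandExcess (a i) (d i + c i - 1) := by
  set D : ι → ℝ := fun j => d j
  set Y : ι → ℝ := fun i => (W *ᵥ D) i + c i - 1
  have hW1 : ∀ i, W i i ≤ 1 := fun i =>
    hrow i ▸ Finset.single_le_sum (fun j _ => hnonneg i j) (Finset.mem_univ i)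
  have hY : ∀ j, 0 < d j → -a j < Y j := by
    intro j hj
    have hdiag : W j j * D j ≤ (W *ᵥ D) j :=
      Finset.single_le_sum (f := fun k => W j k * D k)
        (fun k _ => mul_nonneg (hnonneg j k) (Nat.cast_nonneg _)) (Finset.mem_univ j)
    have : W j j ≤ W j j * D j :=
      le_mul_of_one_le_right (hnonneg j j) (Nat.one_le_cast.mpr hj)
    linarith [ha j, hc0 j]
  have hnode : ∀ i, bandExcess (a i) (Y i) - bandExcess (a i) (D i + c i - 1) ≤
      bandSign (a i) (Y i) * ((W *ᵥ D) i - D i) - bandSlack (a i) (Y i) (d i) * (1 - W i i) := by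
    intro i
    have h := bandExcess_sub_le (t := Y i) (d := d i)
      (by linarith [ha i, hW1 i]) (ha i).le (haw i) (hc0 i) (hc1 i)
    convert h using 3
    simp only [Y, D]; ring
  have key := sum_mul_mulVec_sub_le hsym hnonneg hrow
    (σ := fun i => bandSign (a i) (Y i)) (fun i => bandSlack_nonneg (a i) (Y i) (d i))
    (fun i j hij => bandSign_sub_mul_le (by exact_mod_cast hij)
      (hY j (Nat.zero_lt_of_lt (by exact_mod_cast hij))))
  have hsum : ∑ i, (bandExcess (a i) (Y i) - bandExcess (a i) (D i + c i - 1)) ≤ 0 := by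
    refine (Finset.sum_le_sum fun i _ => hnode i).trans ?_
    rw [Finset.sum_sub_distrib]
    exact sub_nonpos.mpr key
  rw [Finset.sum_sub_distrib] at hsum
  exact sub_nonpos.mp hsum

theorem sum_bandExcess_quantizedStep_le (hsym : ∀ i j, W i j = W j i)
    (hnonneg : ∀ i j, 0 ≤ W i j) (hrow : ∀ i, ∑ j, W i j = 1) {a : ι → ℝ}
    (ha : ∀ i, 1 - W i i < a i) (haw : ∀ i, a i ≤ W i i) (z : ι → ℝ) {m : ℤ}
    (hm : ∀ i, m ≤ ⌊z i⌋) :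
    ∑ i, bandExcess (a i) ((∑ j, W i j * (⌊z j⌋ : ℝ)) + z i - ⌊z i⌋ - m - 1) ≤
      ∑ i, bandExcess (a i) (z i - m - 1) := by
  set d : ι → ℕ := fun i => (⌊z i⌋ - m).toNat
  have hd : ∀ i, (d i : ℝ) = ⌊z i⌋ - m := fun i => by
    simp only [d]; exact_mod_cast Int.toNat_of_nonneg (sub_nonneg.mpr (hm i))
  have h := sum_bandExcess_mulVec_le hsym hnonneg hrow ha haw d
    (c := fun i => Int.fract (z i)) (fun i => Int.fract_nonneg _) (fun i => (Int.fract_lt_one _).le)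
  convert h using 3 with i _ i _
  · have : ∑ j, W i j * (⌊z j⌋ : ℝ) = ∑ j, W i j * d j + m := by
      simp only [hd, mul_sub, Finset.sum_sub_distrib, ← Finset.sum_mul, hrow, one_mul]
      ring
    rw [this, Int.fract, Matrix.mulVec, dotProduct]; ring
  · rw [hd, Int.fract]; ring

end Stochastic

theorem lyapunov_nonincreasing_general {n : ℕ} (hn : 1 < n)
    (G : SimpleGraph (Fin n))
    (W : Matrix (Fin n) (Fin n) ℝ) (hW : Assumption1 G W)
    (x : ℕ → Fin n → ℝ) (hx : Traj W x)
    (γ : ℝ) (hγ : GammaSetup W x γ)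
    (k : ℕ)
    (hm : mfun (Nat.zero_lt_one.trans hn) x (k + 1) = mfun (Nat.zero_lt_one.trans hn) x k) :
    Vfun (Nat.zero_lt_one.trans hn) W γ x (k + 1) -
      Vfun (Nat.zero_lt_one.trans hn) W γ x k ≤ 0 := by
  obtain ⟨hsym, hnonneg, hrow, -, -, -⟩ := hW
  obtain ⟨hγ0, hγc⟩ := hγ
  have hα : ∀ i, 1 - W i i < alpha W γ i := fun i => by unfold alpha; linarith
  have hαW : ∀ i, alpha W γ i ≤ W i i := fun i => by unfold alpha; linarith [(hγc i k).2.2.2]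
  have hm_le : ∀ i, mfun (Nat.zero_lt_one.trans hn) x k ≤ ⌊x k i⌋ := fun i =>
    Finset.inf'_le _ (Finset.mem_univ i)
  rw [sub_nonpos, Vfun, Vfun, hm]
  simp only [hx k]
  exact sum_bandExcess_quantizedStep_le hsym hnonneg hrow hα hαW (x k) hm_le

/-- Lemma 3: the Lyapunov function is non-increasing whenever `m(k+1) = m(k)`. -/
theorem lyapunov_nonincreasing {n : ℕ} (hn : 1 < n)
    (G : SimpleGraph (Fin n)) (hG : G.Connected)
    (W : Matrix (Fin n) (Fin n) ℝ) (hW : Assumption1 G W)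
    (x : ℕ → Fin n → ℝ) (hx : Traj W x)
    (γ : ℝ) (hγ : GammaSetup W x γ)
    (k : ℕ)
    (hm : mfun (Nat.zero_lt_one.trans hn) x (k + 1) = mfun (Nat.zero_lt_one.trans hn) x k) :
    Vfun (Nat.zero_lt_one.trans hn) W γ x (k + 1) -
      Vfun (Nat.zero_lt_one.trans hn) W γ x k ≤ 0 :=
  lyapunov_nonincreasing_general hn G W hW x hx γ hγ k hm
end

section
/- Lemma 4 (parent counting lemma): under Assumption 1 and the γ/α setup, suppose on the time interval [k0, k] that m(t) = m(k0) for all t ∈ [k0, k] and V(t) − V(t+1) < β for all t ∈ [k0, k) (i.e. neither situation S1 nor S2 occurs before time k), and suppose X4(k0) ∪ X5(k0) ∪ X6(k0) ≠ ∅. Let i and j be adjacent nodes such that x_j(t) ≤ m(t) + 1 + α_j for all t ∈ [k0, k] (j stays in X1 ∪ X2 ∪ X3). Define T_s(k0, k) = #{t ∈ [k0, k] : x_s(t) < m(t) + 1} for any node s. Then for every positive integer N: if T_i(k0, k) ≥ N·(α_j/w_ij + 1), then T_j(k0, k) ≥ N. -/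
open Finset Filter

section RealLemmas

lemma lt_add_one_iff_floor_eq {R : Type*} [Ring R] [LinearOrder R] [IsStrictOrderedRing R]
    [FloorRing R] {r : R} {m : ℤ} (h : m ≤ ⌊r⌋) : r < m + 1 ↔ ⌊r⌋ = m := by
  rw [← Int.cast_one, ← Int.cast_add, ← Int.floor_lt]
  omega

-- The summand of `V` minus its linear part `v`.
def nonlinPart (a v : ℝ) : ℝ := max (|v| - a) 0 - v

lemma nonlinPart_eq {a : ℝ} (ha : 0 ≤ a) (v : ℝ) :
    nonlinPart a v = max (a - v) 0 + max (-a - v) 0 - a := by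
  unfold nonlinPart
  rcases le_total v (-a) with h | h
  · rw [abs_of_nonpos (by linarith), max_eq_left (by linarith), max_eq_left (by linarith),
      max_eq_left (by linarith)]; ring
  rcases le_total v a with h' | h'
  · rw [max_eq_right (by rw [sub_nonpos]; exact abs_le.2 ⟨h, h'⟩), max_eq_left (by linarith),
      max_eq_right (by linarith)]; ring
  · rw [abs_of_nonneg (by linarith), max_eq_left (by linarith), max_eq_right (by linarith),
      max_eq_right (by linarith)]; ring

lemma nonlinPart_of_neg_le {a v : ℝ} (ha : 0 ≤ a) (h : -a ≤ v) : nonlinPart a v = -min a v := by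
  rw [nonlinPart_eq ha, max_eq_right (by linarith : -a - v ≤ 0)]
  rcases le_total a v with h' | h'
  · rw [max_eq_right (by linarith), min_eq_left h']; ring
  · rw [max_eq_left (by linarith), min_eq_right h']; ring

lemma min_le_nonlinPart_sub {a u v : ℝ} (ha : 0 ≤ a) (hu : u ≤ a) (huv : u ≤ v) :
    min (v - u) (a - u) ≤ nonlinPart a u - nonlinPart a v := by
  rw [nonlinPart_eq ha, nonlinPart_eq ha, max_eq_left (by linarith : 0 ≤ a - u)]
  have : max (-a - v) 0 ≤ max (-a - u) 0 := max_le_max (by linarith) le_rfl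
  rcases le_total v a with h | h
  · rw [max_eq_left (by linarith : 0 ≤ a - v)]
    linarith [min_le_left (v - u) (a - u)]
  · rw [max_eq_right (by linarith : a - v ≤ 0)]
    linarith [min_le_right (v - u) (a - u)]

end RealLemmas

section FiniteSums

variable {ι : Type*} [Fintype ι]

def cutFlux (W : Matrix ι ι ℝ) (P : ι → Prop) [DecidablePred P] (s : ι) : ℝ :=
  if P s then ∑ l with ¬P l, W s l else -∑ l with P l, W s l

lemma sum_cutFlux_eq_zero {W : Matrix ι ι ℝ} (hW : ∀ i j, W i j = W j i) (P : ι → Prop)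
    [DecidablePred P] : ∑ s, cutFlux W P s = 0 := by
  unfold cutFlux
  rw [Finset.sum_ite, Finset.sum_neg_distrib, add_neg_eq_zero]
  exact Finset.sum_comm.trans (by simp only [hW])

lemma sub_le_sum_of_le_of_sum_eq_zero {e r : ι → ℝ} (hre : ∀ s, r s ≤ e s) (hr : ∑ s, r s = 0)
    (q : ι) : e q - r q ≤ ∑ s, e s := by
  have h := Finset.single_le_sum (f := fun s => e s - r s) (fun s _ => sub_nonneg.2 (hre s))
    (Finset.mem_univ q)
  rwa [Finset.sum_sub_distrib, hr, sub_zero] at h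

lemma sum_mul_sub_eq_sum_mul_max_sub (w : ι → ℝ) {f : ι → ℤ} {m : ℤ} (hf : ∀ l, m ≤ f l) :
    ∑ l, w l * ((f l : ℝ) - m - 1) =
      ∑ l, w l * max ((f l : ℝ) - m - 1) 0 - ∑ l with f l = m, w l := by
  rw [Finset.sum_filter, ← Finset.sum_sub_distrib]
  refine Finset.sum_congr rfl fun l _ => ?_
  rcases (hf l).eq_or_lt with h | h
  · rw [← h, if_pos rfl, max_eq_right (by linarith)]; ring
  · have : (m : ℝ) + 1 ≤ f l := by exact_mod_cast h
    rw [if_neg h.ne', max_eq_left (by linarith)]; ring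

lemma le_sum_mul_max_sub {w : ι → ℝ} (hw : ∀ l, 0 ≤ w l) {f : ι → ℤ} {m : ℤ} {l : ι}
    (hl : m + 2 ≤ f l) : w l ≤ ∑ l', w l' * max ((f l' : ℝ) - m - 1) 0 := by
  refine le_trans ?_ (Finset.single_le_sum (f := fun l' => w l' * max ((f l' : ℝ) - m - 1) 0)
    (fun l' _ => mul_nonneg (hw l') (le_max_right _ _)) (Finset.mem_univ l))
  have : (m : ℝ) + 2 ≤ f l := by exact_mod_cast hl
  exact le_mul_of_one_le_right (hw l) (le_max_of_le_left (by linarith))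

end FiniteSums

lemma sub_add_mul_card_le {y : ℕ → ℝ} {P Q : ℕ → Prop} [DecidablePred P] [DecidablePred Q]
    {a b : ℝ} (ha : 0 ≤ a) (hb : 0 ≤ b) {k0 k : ℕ} (hk : k0 ≤ k)
    (hstep : ∀ t, k0 ≤ t → t < k → y (t + 1) - y t + (if Q t then b else 0) ≤
      (if P t then a else 0) + if P (t + 1) then b else 0) :
    y k - y k0 + b * (#{t ∈ Icc k0 k | Q t} - 1 : ℝ) ≤ (a + b) * #{t ∈ Icc k0 k | P t} := by
  have hsum := Finset.sum_le_sum fun t ht => hstep t (mem_Ico.1 ht).1 (mem_Ico.1 ht).2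
  simp only [Finset.sum_add_distrib, Finset.sum_Ico_sub _ hk, ← Finset.sum_filter,
    Finset.sum_const, nsmul_eq_mul] at hsum
  have hQ : #{t ∈ Icc k0 k | Q t} ≤ #{t ∈ Ico k0 k | Q t} + 1 := by
    rw [← Finset.Ico_insert_right hk, Finset.filter_insert]
    split_ifs
    · exact Finset.card_insert_le _ _
    · exact Nat.le_succ _
  have hP : #{t ∈ Ico k0 k | P t} ≤ #{t ∈ Icc k0 k | P t} :=
    Finset.card_le_card (Finset.filter_subset_filter _ Finset.Ico_subset_Icc_self)
  have hP' : #{t ∈ Ico k0 k | P (t + 1)} ≤ #{t ∈ Icc k0 k | P t} := by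
    refine Finset.card_le_card_of_injOn (· + 1) (fun t ht => ?_)
      (fun _ _ _ _ h => by simpa using h)
    simp only [Finset.coe_filter, Set.mem_ofPred_eq, Finset.mem_Ico, Finset.mem_Icc] at ht ⊢
    exact ⟨⟨by omega, by omega⟩, ht.2⟩
  have h₁ := mul_le_mul_of_nonneg_left
    (show (#{t ∈ Icc k0 k | Q t} : ℝ) ≤ #{t ∈ Ico k0 k | Q t} + 1 by exact_mod_cast hQ) hb
  have h₂ := mul_le_mul_of_nonneg_left ((Nat.cast_le (α := ℝ)).2 hP) ha
  have h₃ := mul_le_mul_of_nonneg_left ((Nat.cast_le (α := ℝ)).2 hP') hb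
  linarith

section Model

variable {n : ℕ} {G : SimpleGraph (Fin n)} {W : Matrix (Fin n) (Fin n) ℝ}
  {x : ℕ → Fin n → ℝ} {γ : ℝ}

namespace Assumption1

lemma symm (hW : Assumption1 G W) (i j : Fin n) : W i j = W j i := hW.1 i j

lemma nonneg (hW : Assumption1 G W) (i j : Fin n) : 0 ≤ W i j := hW.2.1 i j

lemma sum_row (hW : Assumption1 G W) (i : Fin n) : ∑ j, W i j = 1 := hW.2.2.1 i

lemma half_lt_diag (hW : Assumption1 G W) (i : Fin n) : 1 / 2 < W i i := hW.2.2.2.1 i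

lemma eq_zero_of_not_adj (hW : Assumption1 G W) {i j : Fin n} (hij : i ≠ j) (h : ¬G.Adj i j) :
    W i j = 0 :=
  hW.2.2.2.2.1 i j hij h

lemma pos_of_adj (hW : Assumption1 G W) {i j : Fin n} (h : G.Adj i j) : 0 < W i j :=
  (hW.2.2.2.2.2 i j h).2.1

lemma sum_le_one_sub_diag (hW : Assumption1 G W) {s : Fin n} {S : Finset (Fin n)} (hs : s ∉ S) :
    ∑ l ∈ S, W s l ≤ 1 - W s s := by
  rw [← hW.sum_row s, ← Finset.sum_erase_eq_sub (Finset.mem_univ s)]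
  refine Finset.sum_le_sum_of_subset_of_nonneg (fun l hl => ?_) fun l _ _ => hW.nonneg s l
  exact Finset.mem_erase.2 ⟨fun h => hs (h ▸ hl), Finset.mem_univ l⟩

lemma diag_le_one (hW : Assumption1 G W) (s : Fin n) : W s s ≤ 1 := by
  simpa using hW.sum_le_one_sub_diag (Finset.notMem_empty s)

lemma weight_le_one_sub_diag (hW : Assumption1 G W) {i j : Fin n} (hij : i ≠ j) :
    W i j ≤ 1 - W j j := by
  simpa [hW.symm i j] using hW.sum_le_one_sub_diag (s := j) (S := {i}) (by simpa using hij.symm)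

end Assumption1

lemma alpha_pos (hW : Assumption1 G W) (hγ : 0 < γ) (s : Fin n) : 0 < alpha W γ s := by
  unfold alpha
  linarith [hW.diag_le_one s]

lemma deltaMin_le (hW : Assumption1 G W) {p q : Fin n} (h : G.Adj p q) : deltaMin G W ≤ W p q :=
  csInf_le ⟨0, by rintro r ⟨p, q, -, rfl⟩; exact hW.nonneg p q⟩ ⟨p, q, h, rfl⟩

namespace GammaSetup

lemma alpha_le (hγ : GammaSetup W x γ) (s : Fin n) : alpha W γ s ≤ 1 / 2 - γ := by
  have := (hγ.2 s 0).2.2.2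
  unfold alpha
  linarith

lemma fract_le (hγ : GammaSetup W x γ) (t : ℕ) (s : Fin n) : Int.fract (x t s) ≤ 1 - 2 * γ := by
  have := (hγ.2 s t).2.2.1
  rw [← Int.self_sub_floor]
  linarith

lemma fract_le_one_sub_diag (hγ : GammaSetup W x γ) {t : ℕ} {s : Fin n}
    (h : Int.fract (x t s) ≤ alpha W γ s) : Int.fract (x t s) ≤ 1 - W s s := by
  have := (hγ.2 s t).1
  rw [← Int.self_sub_floor] at h ⊢
  unfold alpha at h
  by_contra! h'
  linarith [this h', hγ.1]

lemma floor_eq_add_one_of_le (hγ : GammaSetup W x γ) {t : ℕ} {s : Fin n} {m : ℤ}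
    (h₁ : (m : ℝ) + 1 ≤ x t s) (h₂ : x t s ≤ m + 1 + alpha W γ s) :
    ⌊x t s⌋ = m + 1 ∧ Int.fract (x t s) ≤ 1 - W s s := by
  have hα := hγ.alpha_le s
  have hfl : ⌊x t s⌋ = m + 1 := by
    rw [Int.floor_eq_iff]
    push_cast
    constructor <;> linarith [hγ.1]
  refine ⟨hfl, hγ.fract_le_one_sub_diag ?_⟩
  rw [← Int.self_sub_floor, hfl]
  push_cast
  linarith

lemma le_add_one_sub_diag_of_le (hγ : GammaSetup W x γ) (hW : Assumption1 G W) {t : ℕ}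
    {s : Fin n} {m : ℤ} (h : x t s ≤ m + 1 + alpha W γ s) : x t s ≤ m + 1 + (1 - W s s) := by
  rcases lt_or_ge (x t s) (m + 1) with h' | h'
  · linarith [hW.diag_le_one s]
  obtain ⟨hfl, hfr⟩ := hγ.floor_eq_add_one_of_le h' h
  rw [← Int.self_sub_floor, hfl] at hfr
  push_cast at hfr
  linarith

end GammaSetup

lemma le_floor_of_mfun_eq {hn : 0 < n} {t : ℕ} {m : ℤ} (ht : mfun hn x t = m) (l : Fin n) :
    m ≤ ⌊x t l⌋ :=
  ht ▸ Finset.inf'_le _ (Finset.mem_univ l)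

lemma Traj.sum_succ (hW : Assumption1 G W) (hx : Traj W x) (t : ℕ) :
    ∑ s, x (t + 1) s = ∑ s, x t s := by
  simp only [hx t, Finset.sum_sub_distrib, Finset.sum_add_distrib]
  rw [Finset.sum_comm]
  simp only [← Finset.sum_mul, fun l => (Finset.sum_congr rfl fun s _ => hW.symm s l :
    ∑ s, W s l = ∑ s, W l s), hW.sum_row, one_mul]
  ring

lemma Traj.succ_sub_eq (hW : Assumption1 G W) (hx : Traj W x) {t : ℕ} {m : ℤ}
    (hm : ∀ l, m ≤ ⌊x t l⌋) (s : Fin n) :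
    x (t + 1) s - m - 1 = Int.fract (x t s) + ∑ l, W s l * max ((⌊x t l⌋ : ℝ) - m - 1) 0 -
      ∑ l with ⌊x t l⌋ = m, W s l := by
  rw [add_sub_assoc, ← sum_mul_sub_eq_sum_mul_max_sub _ hm, hx t s, ← Int.self_sub_floor]
  simp only [mul_sub, Finset.sum_sub_distrib, ← Finset.sum_mul, hW.sum_row, one_mul]
  ring

noncomputable def Vgain (W : Matrix (Fin n) (Fin n) ℝ) (γ : ℝ) (x : ℕ → Fin n → ℝ) (m : ℤ)
    (t : ℕ) (s : Fin n) : ℝ :=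
  nonlinPart (alpha W γ s) (x t s - m - 1) - nonlinPart (alpha W γ s) (x (t + 1) s - m - 1)

lemma Vfun_sub_Vfun_succ_eq_sum_Vgain (hW : Assumption1 G W) (hx : Traj W x) {hn : 0 < n}
    {t : ℕ} {m : ℤ} (ht : mfun hn x t = m) (ht1 : mfun hn x (t + 1) = m) :
    Vfun hn W γ x t - Vfun hn W γ x (t + 1) = ∑ s, Vgain W γ x m t s := by
  have := hx.sum_succ hW t
  simp only [Vfun, Vgain, nonlinPart, ht, ht1, Finset.sum_sub_distrib]
  linarith

lemma sum_weight_above_le_Vgain (hW : Assumption1 G W) (hx : Traj W x)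
    (hγ : GammaSetup W x γ) {t : ℕ} {m : ℤ} (hm : ∀ l, m ≤ ⌊x t l⌋) {s : Fin n}
    (hs : ⌊x t s⌋ = m) : ∑ l with ¬⌊x t l⌋ = m, W s l ≤ Vgain W γ x m t s := by
  have hu' := hx.succ_sub_eq hW hm s
  have hE : 0 ≤ ∑ l, W s l * max ((⌊x t l⌋ : ℝ) - m - 1) 0 :=
    Finset.sum_nonneg fun l _ => mul_nonneg (hW.nonneg s l) (le_max_right _ _)
  have hB : ∑ l with ⌊x t l⌋ = m, W s l + ∑ l with ¬⌊x t l⌋ = m, W s l = 1 := by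
    rw [← hW.sum_row s]
    exact Finset.sum_filter_add_sum_filter_not _ _ _
  have hB0 : 0 ≤ ∑ l with ¬⌊x t l⌋ = m, W s l := Finset.sum_nonneg fun l _ => hW.nonneg s l
  have hBle := hW.sum_le_one_sub_diag (S := {l | ¬⌊x t l⌋ = m}) (s := s) (by simp [hs])
  have hu : x t s - m - 1 = Int.fract (x t s) - 1 := by rw [← Int.self_sub_floor, hs]
  have hc := hγ.fract_le t s
  have hα : alpha W γ s = 1 - W s s + γ := rfl
  have hγ0 := hγ.1
  refine le_trans (le_min ?_ ?_) (min_le_nonlinPart_sub (alpha_pos hW hγ0 s).le ?_ ?_) <;>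
    linarith

lemma neg_sum_weight_bottom_le_Vgain (hW : Assumption1 G W) (hx : Traj W x)
    (hγ : GammaSetup W x γ) {t : ℕ} {m : ℤ} (hm : ∀ l, m ≤ ⌊x t l⌋) {s : Fin n}
    (hs : ⌊x t s⌋ ≠ m) : -∑ l with ⌊x t l⌋ = m, W s l ≤ Vgain W γ x m t s := by
  have hu' := hx.succ_sub_eq hW hm s
  set E := ∑ l, W s l * max ((⌊x t l⌋ : ℝ) - m - 1) 0
  set W₀ := ∑ l with ⌊x t l⌋ = m, W s l
  have hE : 0 ≤ E := Finset.sum_nonneg fun l _ => mul_nonneg (hW.nonneg s l) (le_max_right _ _)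
  have hW₀ : W₀ ≤ 1 - W s s := hW.sum_le_one_sub_diag (by simpa using hs)
  have hW₀0 : 0 ≤ W₀ := Finset.sum_nonneg fun l _ => hW.nonneg s l
  have hu : x t s - m - 1 = (⌊x t s⌋ - m - 1) + Int.fract (x t s) := by
    rw [← Int.self_sub_floor]; ring
  have hs1 : m + 1 ≤ ⌊x t s⌋ := lt_of_le_of_ne (hm s) (Ne.symm hs)
  have hs1' : (m : ℝ) + 1 ≤ ⌊x t s⌋ := by exact_mod_cast hs1
  have hc := Int.fract_nonneg (x t s)
  have hα : alpha W γ s = 1 - W s s + γ := rfl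
  have hα0 := (alpha_pos hW hγ.1 s).le
  -- Two or more levels up, the node's own weight `w_ss > α_s` keeps it above `α_s - W₀`.
  have hkey : min (alpha W γ s) (x t s - m - 1) ≤ Int.fract (x t s) + E := by
    rcases hs1.eq_or_lt with h | h
    · rw [hu, ← h]; push_cast; exact (min_le_right _ _).trans (by linarith)
    · have hEs : W s s ≤ E := le_sum_mul_max_sub (hW.nonneg s) (by omega)
      exact (min_le_left _ _).trans (by linarith [hW.half_lt_diag s, hγ.alpha_le s])
  unfold Vgain
  rw [nonlinPart_of_neg_le hα0 (by linarith), nonlinPart_of_neg_le hα0 (by linarith [hγ.1])]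
  have : min (alpha W γ s) (x t s - m - 1) ≤ min (alpha W γ s) (x (t + 1) s - m - 1) + W₀ := by
    rw [← min_add_add_right]
    exact le_min ((min_le_left _ _).trans (by linarith)) (hkey.trans (by linarith))
  linarith

lemma Vgain_sub_cutFlux_le (hW : Assumption1 G W) (hx : Traj W x) (hγ : GammaSetup W x γ)
    {hn : 0 < n} {t : ℕ} {m : ℤ} (ht : mfun hn x t = m) (ht1 : mfun hn x (t + 1) = m)
    (q : Fin n) :
    Vgain W γ x m t q - cutFlux W (fun l => ⌊x t l⌋ = m) q ≤
      Vfun hn W γ x t - Vfun hn W γ x (t + 1) := by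
  have hm := le_floor_of_mfun_eq ht
  have hle : ∀ s, cutFlux W (fun l => ⌊x t l⌋ = m) s ≤ Vgain W γ x m t s := fun s => by
    unfold cutFlux
    split_ifs with hs
    exacts [sum_weight_above_le_Vgain hW hx hγ hm hs, neg_sum_weight_bottom_le_Vgain hW hx hγ hm hs]
  rw [Vfun_sub_Vfun_succ_eq_sum_Vgain hW hx ht ht1]
  exact sub_le_sum_of_le_of_sum_eq_zero hle (sum_cutFlux_eq_zero hW.symm _) q

section SmallDrop

variable {hn : 0 < n} {t : ℕ} {m : ℤ}

lemma weight_eq_zero_of_add_two_le_floor (hW : Assumption1 G W) (hx : Traj W x)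
    (hγ : GammaSetup W x γ) (ht : mfun hn x t = m) (ht1 : mfun hn x (t + 1) = m)
    (hV : Vfun hn W γ x t - Vfun hn W γ x (t + 1) < min γ (deltaMin G W)) {j : Fin n}
    (hj : ⌊x t j⌋ = m + 1) (hfr : Int.fract (x t j) ≤ 1 - W j j) {l : Fin n}
    (hl : m + 2 ≤ ⌊x t l⌋) : W j l = 0 := by
  by_contra hne
  have hm := le_floor_of_mfun_eq ht
  have hδ := deltaMin_le hW (not_not.1 (mt (hW.eq_zero_of_not_adj (by rintro rfl; omega)) hne))
  have hgain := Vgain_sub_cutFlux_le hW hx hγ ht ht1 j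
  unfold cutFlux Vgain at hgain
  dsimp only at hgain
  have hu' := hx.succ_sub_eq hW hm j
  set E := ∑ l, W j l * max ((⌊x t l⌋ : ℝ) - m - 1) 0
  set W₀ := ∑ l with ⌊x t l⌋ = m, W j l
  have hEl : W j l ≤ E := le_sum_mul_max_sub (hW.nonneg j) hl
  have hW₀ : W₀ ≤ 1 - W j j := hW.sum_le_one_sub_diag (by simp [hj])
  have hW₀0 : 0 ≤ W₀ := Finset.sum_nonneg fun l _ => hW.nonneg j l
  have hu : x t j - m - 1 = Int.fract (x t j) := by rw [← Int.self_sub_floor, hj]; push_cast; ring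
  have hα : alpha W γ j = 1 - W j j + γ := rfl
  have hα0 := (alpha_pos hW hγ.1 j).le
  have hc := Int.fract_nonneg (x t j)
  have hγ0 := hγ.1
  have hlj := hW.nonneg j l
  rw [if_neg (by simp [hj]), nonlinPart_of_neg_le hα0 (by linarith),
    nonlinPart_of_neg_le hα0 (by linarith), hu, min_eq_right (by linarith)] at hgain
  -- `V` drops by at least `γ` if `x_j` reaches `α_j` above `m + 1`, else by at least `w_jl ≥ δ`.
  rcases min_choice (alpha W γ j) (x (t + 1) j - m - 1) with h | h <;> rw [h] at hgain
  · linarith [min_le_left γ (deltaMin G W)]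
  · linarith [min_le_right γ (deltaMin G W)]

lemma succ_sub_lt_of_floor_eq (hW : Assumption1 G W) (hx : Traj W x) (hγ : GammaSetup W x γ)
    (ht : mfun hn x t = m) (ht1 : mfun hn x (t + 1) = m)
    (hV : Vfun hn W γ x t - Vfun hn W γ x (t + 1) < min γ (deltaMin G W)) {i j : Fin n}
    (hij : i ≠ j) (hj : ⌊x t j⌋ = m) (hj1 : x (t + 1) j ≤ m + 1 + alpha W γ j) :
    x (t + 1) j - x t j <
      1 - W j j + min γ (deltaMin G W) - if ⌊x t i⌋ = m then W i j else 0 := by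
  have hm := le_floor_of_mfun_eq ht
  have hgain := Vgain_sub_cutFlux_le hW hx hγ ht ht1 j
  unfold cutFlux Vgain at hgain
  dsimp only at hgain
  rw [if_pos hj] at hgain
  have hu' := hx.succ_sub_eq hW hm j
  set E := ∑ l, W j l * max ((⌊x t l⌋ : ℝ) - m - 1) 0
  set W₀ := ∑ l with ⌊x t l⌋ = m, W j l
  set B := ∑ l with ¬⌊x t l⌋ = m, W j l
  have hE : 0 ≤ E := Finset.sum_nonneg fun l _ => mul_nonneg (hW.nonneg j l) (le_max_right _ _)
  have hB : W₀ + B = 1 := by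
    rw [← hW.sum_row j]
    exact Finset.sum_filter_add_sum_filter_not _ _ _
  have hB0 : 0 ≤ B := Finset.sum_nonneg fun l _ => hW.nonneg j l
  have hBi : B + (if ⌊x t i⌋ = m then W i j else 0) ≤ 1 - W j j := by
    split_ifs with hi
    · rw [hW.symm i j, add_comm, ← Finset.sum_insert (by simp [hi])]
      exact hW.sum_le_one_sub_diag (by simp [hj, hij.symm])
    · simpa using hW.sum_le_one_sub_diag (S := {l | ¬⌊x t l⌋ = m}) (by simp [hj])
  have hu : x t j - m - 1 = Int.fract (x t j) - 1 := by rw [← Int.self_sub_floor, hj]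
  have hc := hγ.fract_le t j
  have hmin := min_le_nonlinPart_sub (alpha_pos hW hγ.1 j).le (u := x t j - m - 1)
    (v := x (t + 1) j - m - 1) (by linarith [hγ.1]) (by linarith)
  rw [min_eq_left (by linarith)] at hmin
  linarith

lemma succ_sub_le_of_floor_eq_add_one (hW : Assumption1 G W) (hx : Traj W x)
    (hγ : GammaSetup W x γ) (ht : mfun hn x t = m) (ht1 : mfun hn x (t + 1) = m)
    (hV : Vfun hn W γ x t - Vfun hn W γ x (t + 1) < min γ (deltaMin G W)) {i j : Fin n}
    (hj : ⌊x t j⌋ = m + 1) (hfr : Int.fract (x t j) ≤ 1 - W j j) :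
    x (t + 1) j - x t j ≤ -if ⌊x t i⌋ = m then W i j else 0 := by
  have hE : ∑ l, W j l * max ((⌊x t l⌋ : ℝ) - m - 1) 0 = 0 := by
    refine Finset.sum_eq_zero fun l _ => ?_
    rcases lt_or_ge ⌊x t l⌋ (m + 2) with hl | hl
    · have : (⌊x t l⌋ : ℝ) ≤ m + 1 := by exact_mod_cast (by omega : ⌊x t l⌋ ≤ m + 1)
      rw [max_eq_right (by linarith), mul_zero]
    · rw [weight_eq_zero_of_add_two_le_floor hW hx hγ ht ht1 hV hj hfr hl, zero_mul]
  have hu' := hx.succ_sub_eq hW (le_floor_of_mfun_eq ht) j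
  have hu : x t j - m - 1 = Int.fract (x t j) := by rw [← Int.self_sub_floor, hj]; push_cast; ring
  have hi : (if ⌊x t i⌋ = m then W i j else 0) ≤ ∑ l with ⌊x t l⌋ = m, W j l := by
    split_ifs with hi
    · rw [hW.symm i j]
      exact Finset.single_le_sum (fun l _ => hW.nonneg j l) (by simp [hi])
    · exact Finset.sum_nonneg fun l _ => hW.nonneg j l
  linarith

lemma max_succ_sub_max_le (hW : Assumption1 G W) (hx : Traj W x) (hγ : GammaSetup W x γ)
    (ht : mfun hn x t = m) (ht1 : mfun hn x (t + 1) = m)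
    (hV : Vfun hn W γ x t - Vfun hn W γ x (t + 1) < min γ (deltaMin G W)) {i j : Fin n}
    (hadj : G.Adj i j) (hjt : x t j ≤ m + 1 + alpha W γ j)
    (hjt1 : x (t + 1) j ≤ m + 1 + alpha W γ j) :
    max (x (t + 1) j) (m + 1) - max (x t j) (m + 1) +
        (if x t i < mfun hn x t + 1 then W i j else 0) ≤
      (if x t j < mfun hn x t + 1 then alpha W γ j else 0) +
        if x (t + 1) j < mfun hn x (t + 1) + 1 then W i j else 0 := by
  have hm := le_floor_of_mfun_eq ht
  have hwij := hW.pos_of_adj hadj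
  have hwle := hW.weight_le_one_sub_diag hadj.ne
  have hα : alpha W γ j = 1 - W j j + γ := rfl
  have hγ0 := hγ.1
  have hβ := min_le_left γ (deltaMin G W)
  rw [ht, ht1, if_congr (lt_add_one_iff_floor_eq (hm i)) rfl rfl]
  have hc0 : 0 ≤ if ⌊x t i⌋ = m then W i j else 0 := by split_ifs <;> linarith
  have hc1 : (if ⌊x t i⌋ = m then W i j else 0) ≤ W i j := by split_ifs <;> linarith
  have hnext : 0 ≤ if x (t + 1) j < m + 1 then W i j else 0 := by split_ifs <;> linarith
  set cᵢ := if ⌊x t i⌋ = m then W i j else 0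
  by_cases hlow : x t j < m + 1
  · have hstep := succ_sub_lt_of_floor_eq hW hx hγ ht ht1 hV hadj.ne
      ((lt_add_one_iff_floor_eq (hm j)).1 hlow) hjt1
    have : max (x (t + 1) j) (m + 1) ≤ m + 1 + alpha W γ j - cᵢ :=
      max_le (by linarith) (by linarith)
    rw [max_eq_right hlow.le, if_pos hlow]
    linarith
  · obtain ⟨hj, hfr⟩ := hγ.floor_eq_add_one_of_le (not_lt.1 hlow) hjt
    have hstep := succ_sub_le_of_floor_eq_add_one hW hx hγ ht ht1 hV (i := i) hj hfr
    rw [max_eq_left (not_lt.1 hlow), if_neg hlow]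
    by_cases hlow1 : x (t + 1) j < m + 1
    · rw [max_eq_right hlow1.le, if_pos hlow1]
      linarith
    · rw [max_eq_left (not_lt.1 hlow1), if_neg hlow1]
      linarith

end SmallDrop

end Model

theorem parent_counting_general {n : ℕ} (hn : 1 < n)
    (G : SimpleGraph (Fin n))
    (W : Matrix (Fin n) (Fin n) ℝ) (hW : Assumption1 G W)
    (x : ℕ → Fin n → ℝ) (hx : Traj W x)
    (γ : ℝ) (hγ : GammaSetup W x γ)
    (k0 k : ℕ) (hk : k0 ≤ k)
    (hm : ∀ t, k0 ≤ t → t ≤ k →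
      mfun (Nat.zero_lt_one.trans hn) x t = mfun (Nat.zero_lt_one.trans hn) x k0)
    (hV : ∀ t, k0 ≤ t → t < k →
      Vfun (Nat.zero_lt_one.trans hn) W γ x t - Vfun (Nat.zero_lt_one.trans hn) W γ x (t + 1) <
        min γ (deltaMin G W))
    (i j : Fin n) (hadj : G.Adj i j)
    (hj : ∀ t, k0 ≤ t → t ≤ k →
      x t j ≤ (mfun (Nat.zero_lt_one.trans hn) x t : ℝ) + 1 + alpha W γ j)
    (N : ℕ)
    (hTi : (N : ℝ) * (alpha W γ j / W i j + 1) ≤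
      (Tcount (Nat.zero_lt_one.trans hn) x i k0 k : ℝ)) :
    N ≤ Tcount (Nat.zero_lt_one.trans hn) x j k0 k := by
  set m := mfun (Nat.zero_lt_one.trans hn) x k0
  set Tᵢ := Tcount (Nat.zero_lt_one.trans hn) x i k0 k
  set Tⱼ := Tcount (Nat.zero_lt_one.trans hn) x j k0 k
  have hwij := hW.pos_of_adj hadj
  have hα := alpha_pos hW hγ.1 j
  have hcount := sub_add_mul_card_le (y := fun t => max (x t j) (m + 1)) hα.le hwij.le hk
    fun t h₁ h₂ => max_succ_sub_max_le hW hx hγ (hm t h₁ h₂.le) (hm (t + 1) (by omega) h₂)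
      (hV t h₁ h₂) hadj (hm t h₁ h₂.le ▸ hj t h₁ h₂.le)
      (hm (t + 1) (by omega) h₂ ▸ hj (t + 1) (by omega) h₂)
  change _ + _ * ((Tᵢ : ℝ) - 1) ≤ _ * (Tⱼ : ℝ) at hcount
  have hstart : max (x k0 j) (m + 1) ≤ m + 1 + (1 - W j j) :=
    max_le (hγ.le_add_one_sub_diag_of_le hW (hj k0 le_rfl hk)) (by linarith [hW.diag_le_one j])
  have hend : (m : ℝ) + 1 ≤ max (x k j) (m + 1) := le_max_right _ _
  have hN : N * (alpha W γ j + W i j) ≤ W i j * Tᵢ := by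
    have := mul_le_mul_of_nonneg_left hTi hwij.le
    rwa [mul_left_comm, mul_add, mul_div_cancel₀ _ hwij.ne', mul_one] at this
  have hTij : W i j * Tᵢ < (Tⱼ + 1) * (alpha W γ j + W i j) := by
    have : alpha W γ j = 1 - W j j + γ := rfl
    nlinarith [hγ.1]
  have := lt_of_mul_lt_mul_right (hN.trans_lt hTij) (by linarith)
  exact_mod_cast Nat.lt_succ_iff.1 (by exact_mod_cast this)

/-- Lemma 4 (parent counting lemma). -/
theorem parent_counting {n : ℕ} (hn : 1 < n)
    (G : SimpleGraph (Fin n)) (hG : G.Connected)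
    (W : Matrix (Fin n) (Fin n) ℝ) (hW : Assumption1 G W)
    (x : ℕ → Fin n → ℝ) (hx : Traj W x)
    (γ : ℝ) (hγ : GammaSetup W x γ)
    (k0 k : ℕ) (hk : k0 ≤ k)
    (hm : ∀ t, k0 ≤ t → t ≤ k →
      mfun (Nat.zero_lt_one.trans hn) x t = mfun (Nat.zero_lt_one.trans hn) x k0)
    (hV : ∀ t, k0 ≤ t → t < k →
      Vfun (Nat.zero_lt_one.trans hn) W γ x t - Vfun (Nat.zero_lt_one.trans hn) W γ x (t + 1) <
        min γ (deltaMin G W))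
    (hne : ∃ p, (mfun (Nat.zero_lt_one.trans hn) x k0 : ℝ) + 1 + alpha W γ p < x k0 p)
    (i j : Fin n) (hadj : G.Adj i j)
    (hj : ∀ t, k0 ≤ t → t ≤ k →
      x t j ≤ (mfun (Nat.zero_lt_one.trans hn) x t : ℝ) + 1 + alpha W γ j)
    (N : ℕ) (hN : 0 < N)
    (hTi : (N : ℝ) * (alpha W γ j / W i j + 1) ≤
      (Tcount (Nat.zero_lt_one.trans hn) x i k0 k : ℝ)) :
    N ≤ Tcount (Nat.zero_lt_one.trans hn) x j k0 k :=
  parent_counting_general hn G W hW x hx γ hγ k0 k hk hm hV i j hadj hj N hTi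
end
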